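/- Let 𝒢=(G,w) be a pruned positive-weighted graph with V(G)={1,...,n}, and write D_{i,j}=D_{i,j}(𝒢). Then G contains a subgraph that is a subdivision of K₅ if and only if there exists a 5-element subset Q of [n] such that for any distinct a,b ∈ Q, either D_{a,b} is indecomposable, or there exists a sequence (x₁,...,x_r) of vertices in [n]∖Q (depending on {a,b}) such that D_{a,x₁}, D_{x₁,x₂}, ..., D_{x_r,b} are all indecomposable, and such that for distinct pairs {a,b} ≠ {a',b'} in Q the corresponding sequences do not intersect. -/

import Mathlib

open SimpleGraph

variable {V : Type*}

/-- weight of a walk: sum of the weights of its edges -/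
noncomputable def walkWeight (G : SimpleGraph V) (w : Sym2 V → ℝ) {i j : V} (p : G.Walk i j) : ℝ :=
  (p.edges.map w).sum

/-- the 2-weight: min over paths joining i and j -/
noncomputable def wdist (G : SimpleGraph V) (w : Sym2 V → ℝ) (i j : V) : ℝ :=
  sInf {x : ℝ | ∃ p : G.Walk i j, p.IsPath ∧ walkWeight G w p = x}

def Realizes (G : SimpleGraph V) (w : Sym2 V → ℝ) {i j : V} (p : G.Walk i j) : Prop :=
  p.IsPath ∧ walkWeight G w p = wdist G w i j

def UsefulEdge (G : SimpleGraph V) (w : Sym2 V → ℝ) (e : Sym2 V) : Prop :=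
  ∃ a b : V, a ≠ b ∧ ∀ p : G.Walk a b, Realizes G w p → e ∈ p.edges

def Pruned (G : SimpleGraph V) (w : Sym2 V → ℝ) : Prop :=
  ∀ e ∈ G.edgeSet, UsefulEdge G w e

def PosWeights (G : SimpleGraph V) (w : Sym2 V → ℝ) : Prop :=
  ∀ e ∈ G.edgeSet, 0 < w e

def Indec (G : SimpleGraph V) (w : Sym2 V → ℝ) (i j : V) : Prop :=
  ∀ z : V, z ≠ i → z ≠ j → wdist G w i j < wdist G w i z + wdist G w z j

def IsLeaf (G : SimpleGraph V) (v : V) : Prop := (G.neighborSet v).ncard = 1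

def IsSnake (G : SimpleGraph V) : Prop :=
  G.IsTree ∧ {v : V | IsLeaf G v}.ncard = 2

def IsCaterpillar (G : SimpleGraph V) : Prop :=
  G.IsTree ∧ ∃ (x₁ x₂ : V) (p : G.Walk x₁ x₂), p.IsPath ∧
    {v : V | v ∈ p.support} = {v : V | 2 ≤ (G.neighborSet v).ncard}

def IsPolygon {n : ℕ} [NeZero n] (G : SimpleGraph (Fin n)) : Prop :=
  ∃ σ : Equiv.Perm (Fin n), G.edgeSet = Set.range (fun i : Fin n => s(σ i, σ (i + 1)))

noncomputable def tmin (G : SimpleGraph V) (w : Sym2 V → ℝ) (x : V) : ℝ :=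
  (1 / 2) * sInf {r : ℝ | ∃ y z : V, y ≠ x ∧ z ≠ x ∧ y ≠ z ∧
    r = wdist G w x y + wdist G w x z - wdist G w y z}

def IsBipartiteOn (G : SimpleGraph V) (X Y : Set V) : Prop :=
  X ∩ Y = ∅ ∧ X ∪ Y = Set.univ ∧ ∀ a b : V, G.Adj a b → (a ∈ X ∧ b ∈ Y) ∨ (a ∈ Y ∧ b ∈ X)

noncomputable def chainSum {α : Type*} (D : α → α → ℝ) : List α → ℝ
  | [] => 0
  | [_] => 0
  | a :: b :: l => D a b + chainSum D (b :: l)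

def FIndec {n : ℕ} (D : Fin n → Fin n → ℝ) (i j : Fin n) : Prop :=
  ∀ z : Fin n, z ≠ i → z ≠ j → D i j < D i z + D z j

def TriangleIneq {n : ℕ} (D : Fin n → Fin n → ℝ) : Prop :=
  ∀ i j k : Fin n, i ≠ j → j ≠ k → i ≠ k → D i j ≤ D i k + D k j

def MaxTwice (x y z : ℝ) : Prop :=
  (x = y ∧ z ≤ x) ∨ (x = z ∧ y ≤ x) ∨ (y = z ∧ x ≤ y)

def FourPoint {n : ℕ} (D : Fin n → Fin n → ℝ) : Prop :=
  ∀ i j k h : Fin n, i ≠ j → i ≠ k → i ≠ h → j ≠ k → j ≠ h → k ≠ h →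
    MaxTwice (D i j + D k h) (D i k + D j h) (D i h + D k j)

def MedianFamily {n : ℕ} (D : Fin n → Fin n → ℝ) : Prop :=
  ∀ a b c : Fin n, ∃! m : Fin n,
    ∀ i ∈ ({a, b, c} : Set (Fin n)), ∀ j ∈ ({a, b, c} : Set (Fin n)), i ≠ j →
      D i j = D i m + D j m

noncomputable def tminF {n : ℕ} (D : Fin n → Fin n → ℝ) (x : Fin n) : ℝ :=
  (1 / 2) * sInf {r : ℝ | ∃ y z : Fin n, y ≠ x ∧ z ≠ x ∧ y ≠ z ∧ r = D x y + D x z - D y z}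

def interiorSet {G : SimpleGraph V} {u v : V} (p : G.Walk u v) : Set V :=
  {x : V | x ∈ p.support ∧ x ≠ u ∧ x ≠ v}

/-- `G` contains a subgraph that is a subdivision of `K₅`: there are 5 branch vertices and a
system of pairwise internally disjoint paths joining them, whose interior vertices avoid the
branch vertices. -/
def ContainsSubdivisionK5 (G : SimpleGraph V) : Prop :=
  ∃ f : Fin 5 → V, Function.Injective f ∧
    ∃ P : ∀ a b : Fin 5, G.Walk (f a) (f b),
      (∀ a b : Fin 5, a ≠ b → (P a b).IsPath) ∧
      (∀ a b : Fin 5, a ≠ b → ∀ x ∈ interiorSet (P a b), x ∉ Set.range f) ∧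
      (∀ a b a' b' : Fin 5, a ≠ b → a' ≠ b' → ({a, b} : Finset (Fin 5)) ≠ {a', b'} →
        ∀ x ∈ interiorSet (P a b), x ∉ (P a' b').support)

/-!
Adjacent vertices of a pruned positive-weighted graph have indecomposable 2-weight: if
`D a b ≥ D a z + D z b` for an edge `ab`, two realizing paths through `z` form a detour that avoids
`ab` and is no heavier, so swapping `ab` for it in any realizing path yields a realizing path
without `ab`, contradicting usefulness. Conversely an indecomposable 2-weight is realized by a
single edge, since a realizing path through an intermediate vertex `z` would give
`D a b ≥ D a z + D z b`. So chains of indecomposable 2-weights are walks of `G`, and the branch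
paths of a subdivision of `K₅` correspond to the vertex sequences attached to the pairs of `Q`.
-/

namespace SimpleGraph

variable {G : SimpleGraph V} {w : Sym2 V → ℝ}

section walkWeight

@[simp]
lemma walkWeight_cons {u v x : V} (h : G.Adj u v) (p : G.Walk v x) :
    walkWeight G w (Walk.cons h p) = w s(u, v) + walkWeight G w p := by
  simp [walkWeight]

@[simp]
lemma walkWeight_append {u v x : V} (p : G.Walk u v) (q : G.Walk v x) :
    walkWeight G w (p.append q) = walkWeight G w p + walkWeight G w q := by
  simp [walkWeight]

@[simp]
lemma walkWeight_reverse {u v : V} (p : G.Walk u v) :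
    walkWeight G w p.reverse = walkWeight G w p := by
  simp [walkWeight, List.sum_reverse]

lemma walkWeight_nonneg (hw : PosWeights G w) {u v : V} (p : G.Walk u v) :
    0 ≤ walkWeight G w p :=
  List.sum_nonneg <| by
    simpa using fun e he => (hw e (p.edges_subset_edgeSet he)).le

lemma walkWeight_pos (hw : PosWeights G w) {u v : V} (huv : u ≠ v) (p : G.Walk u v) :
    0 < walkWeight G w p := by
  cases p with
  | nil => exact absurd rfl huv
  | cons h q =>
    rw [walkWeight_cons]
    exact add_pos_of_pos_of_nonneg (hw _ h) (walkWeight_nonneg hw q)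

lemma le_walkWeight_of_mem_edges (hw : PosWeights G w) {u v : V} {p : G.Walk u v}
    {e : Sym2 V} (he : e ∈ p.edges) : w e ≤ walkWeight G w p :=
  List.single_le_sum (by simpa using fun f hf => (hw f (p.edges_subset_edgeSet hf)).le) _
    (List.mem_map_of_mem he)

lemma walkWeight_bypass_le [DecidableEq V] (hw : PosWeights G w) {u v : V} (p : G.Walk u v) :
    walkWeight G w p.bypass ≤ walkWeight G w p :=
  (p.edges_bypass_sublist_edges.map w).sum_le_sum <| by
    simpa using fun e he => (hw e (p.edges_subset_edgeSet he)).le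

end walkWeight

lemma Walk.exists_eq_append_cons_of_mem_edges {x y : V} (p : G.Walk x y) {e : Sym2 V}
    (he : e ∈ p.edges) :
    ∃ (u v : V) (h : G.Adj u v) (q : G.Walk x u) (r : G.Walk v y),
      s(u, v) = e ∧ p = q.append (Walk.cons h r) := by
  induction p with
  | nil => simp at he
  | cons h p ih =>
    rcases List.mem_cons.mp he with rfl | he
    · exact ⟨_, _, h, Walk.nil, p, rfl, rfl⟩
    · obtain ⟨u, v, h', q, r, huv, rfl⟩ := ih he
      exact ⟨u, v, h', Walk.cons h q, r, huv, rfl⟩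

lemma Walk.IsTrail.exists_replace_edge {x y a b : V} {p : G.Walk x y} (hp : p.IsTrail)
    (he : s(a, b) ∈ p.edges) (m : G.Walk a b) (hm : s(a, b) ∉ m.edges) :
    ∃ W : G.Walk x y, s(a, b) ∉ W.edges ∧
      walkWeight G w W + w s(a, b) = walkWeight G w p + walkWeight G w m := by
  obtain ⟨u, v, h, q, r, huv, rfl⟩ := p.exists_eq_append_cons_of_mem_edges he
  obtain ⟨m', hm', hm'w⟩ : ∃ m' : G.Walk u v, s(a, b) ∉ m'.edges ∧
      walkWeight G w m' = walkWeight G w m := by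
    rcases Sym2.eq_iff.mp huv with ⟨rfl, rfl⟩ | ⟨rfl, rfl⟩
    · exact ⟨m, hm, rfl⟩
    · exact ⟨m.reverse, by simpa using hm, walkWeight_reverse m⟩
  have hqr : s(a, b) ∉ q.edges ∧ s(a, b) ∉ r.edges := by
    have := hp.edges_nodup
    simp only [Walk.edges_append, Walk.edges_cons, huv] at this
    grind [List.nodup_append, List.nodup_cons]
  refine ⟨q.append (m'.append r), ?_, ?_⟩
  · simp only [Walk.edges_append, List.mem_append]
    tauto
  · simp only [walkWeight_append, walkWeight_cons, huv, hm'w]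
    ring

section wdist

variable [Finite V]

lemma finite_setOf_isPath_walkWeight (i j : V) :
    {x : ℝ | ∃ p : G.Walk i j, p.IsPath ∧ walkWeight G w p = x}.Finite := by
  classical
  have := Fintype.ofFinite V
  refine (Set.finite_range fun p : G.Path i j => walkWeight G w (p : G.Walk i j)).subset ?_
  rintro _ ⟨p, hp, rfl⟩
  exact ⟨⟨p, hp⟩, rfl⟩

lemma wdist_le_of_isPath {i j : V} {p : G.Walk i j} (hp : p.IsPath) :
    wdist G w i j ≤ walkWeight G w p :=
  csInf_le (finite_setOf_isPath_walkWeight i j).bddBelow ⟨p, hp, rfl⟩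

lemma wdist_le_of_adj {i j : V} (h : G.Adj i j) : wdist G w i j ≤ w s(i, j) := by
  simpa [walkWeight, h.edges_toWalk] using
    wdist_le_of_isPath (w := w) h.isPath_toWalk

lemma exists_realizes (hconn : G.Connected) (i j : V) : ∃ p : G.Walk i j, Realizes G w p := by
  classical
  obtain ⟨p⟩ := hconn.preconnected i j
  have hne : {x : ℝ | ∃ p : G.Walk i j, p.IsPath ∧ walkWeight G w p = x}.Nonempty :=
    ⟨_, p.toPath, p.toPath.property, rfl⟩
  obtain ⟨q, hq, hqw⟩ := hne.csInf_mem (finite_setOf_isPath_walkWeight i j)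
  exact ⟨q, hq, hqw⟩

lemma realizes_bypass_of_walkWeight_le [DecidableEq V] (hw : PosWeights G w) {i j : V}
    {p : G.Walk i j} (h : walkWeight G w p ≤ wdist G w i j) : Realizes G w p.bypass :=
  ⟨p.bypass_isPath, le_antisymm ((walkWeight_bypass_le hw p).trans h)
    (wdist_le_of_isPath p.bypass_isPath)⟩

lemma _root_.Indec.adj (hconn : G.Connected) {a b : V} (hab : a ≠ b)
    (h : Indec G w a b) : G.Adj a b := by
  obtain ⟨p, hp, hpw⟩ := exists_realizes (w := w) hconn a b
  cases p with
  | nil => exact absurd rfl hab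
  | @cons _ c _ hac q =>
    obtain rfl | hcb := eq_or_ne c b
    · exact hac
    have hlt := h c hac.ne' hcb
    have hac_le := wdist_le_of_adj (w := w) hac
    have hcb_le := wdist_le_of_isPath (w := w) hp.of_cons
    rw [← hpw, walkWeight_cons] at hlt
    linarith

lemma not_usefulEdge_of_detour (hconn : G.Connected) (hw : PosWeights G w) {a b : V}
    (m : G.Walk a b) (hm : s(a, b) ∉ m.edges) (hmw : walkWeight G w m ≤ w s(a, b)) :
    ¬ UsefulEdge G w s(a, b) := by
  classical
  rintro ⟨x, y, -, hforce⟩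
  obtain ⟨p, hp⟩ := exists_realizes (w := w) hconn x y
  obtain ⟨W, hW, hWw⟩ := hp.1.isTrail.exists_replace_edge (hforce p hp) m hm
  have hreal : Realizes G w W.bypass :=
    realizes_bypass_of_walkWeight_le hw (by rw [← hp.2]; linarith)
  exact hW (W.edges_bypass_subset_edges (hforce _ hreal))

lemma Adj.indec (hconn : G.Connected) (hw : PosWeights G w) (hpruned : Pruned G w) {a b : V}
    (hab : G.Adj a b) : Indec G w a b := by
  intro z hza hzb
  by_contra! hle
  obtain ⟨p, hp⟩ := exists_realizes (w := w) hconn a z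
  obtain ⟨q, hq⟩ := exists_realizes (w := w) hconn z b
  have hpq : walkWeight G w p + walkWeight G w q ≤ w s(a, b) := by
    rw [hp.2, hq.2]
    exact hle.trans (wdist_le_of_adj hab)
  have hp0 := walkWeight_pos hw hza.symm p
  have hq0 := walkWeight_pos hw hzb q
  refine not_usefulEdge_of_detour hconn hw (p.append q) ?_ (by simpa using hpq) (hpruned _ hab)
  simp only [Walk.edges_append, List.mem_append, not_or]
  exact ⟨fun he => by linarith [le_walkWeight_of_mem_edges hw he],
    fun he => by linarith [le_walkWeight_of_mem_edges hw he]⟩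

end wdist

section chains

lemma Walk.support_eq_cons_append {u v : V} (p : G.Walk u v) (huv : u ≠ v) :
    p.support = u :: (p.support.tail.dropLast ++ [v]) := by
  cases p with
  | nil => exact absurd rfl huv
  | cons _ q => simp

lemma Walk.IsPath.mem_interiorSet {u v x : V} {p : G.Walk u v} (hp : p.IsPath)
    (hx : x ∈ p.support.tail.dropLast) : x ∈ interiorSet p := by
  cases p with
  | nil => simp at hx
  | cons h q =>
    rw [Walk.support_cons, List.tail_cons] at hx
    have hnd := hp.support_nodup
    rw [Walk.support_cons, ← q.dropLast_support_concat] at hnd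
    refine ⟨by simp [List.mem_of_mem_dropLast hx], ?_, ?_⟩ <;> rintro rfl
    · exact (List.nodup_cons.mp hnd).1 (List.mem_append_left _ hx)
    · exact List.disjoint_of_nodup_append (List.nodup_cons.mp hnd).2 hx (List.mem_singleton_self _)

lemma exists_walk_support_subset_of_isChain {R : V → V → Prop}
    (hR : ∀ ⦃a b⦄, a ≠ b → R a b → G.Adj a b) {x y : V} {l : List V}
    (h : (x :: (l ++ [y])).IsChain R) : ∃ p : G.Walk x y, p.support ⊆ x :: (l ++ [y]) := by
  induction l generalizing x with
  | nil =>
    obtain rfl | hxy := eq_or_ne x y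
    · exact ⟨Walk.nil, by simp⟩
    · exact ⟨(hR hxy (List.isChain_pair.mp h)).toWalk, by simp⟩
  | cons z l ih =>
    rw [List.cons_append, List.isChain_cons_cons] at h
    obtain ⟨p, hp⟩ := ih h.2
    obtain rfl | hxz := eq_or_ne x z
    · exact ⟨p, List.subset_cons_of_subset _ hp⟩
    · exact ⟨Walk.cons (hR hxz h.1) p, List.cons_subset_cons _ hp⟩

lemma exists_isPath_of_isChain_indec [Finite V] (hconn : G.Connected) {x y : V} {l : List V}
    (h : (x :: (l ++ [y])).IsChain (Indec G w)) :
    ∃ p : G.Walk x y, p.IsPath ∧ ∀ v ∈ interiorSet p, v ∈ l := by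
  classical
  obtain ⟨p, hp⟩ := exists_walk_support_subset_of_isChain (fun _ _ => Indec.adj hconn) h
  refine ⟨p.bypass, p.bypass_isPath, fun v ⟨hv, hvx, hvy⟩ => ?_⟩
  simpa [hvx, hvy] using hp (p.support_bypass_subset_support hv)

end chains

end SimpleGraph

def IndecK5System [DecidableEq V] (G : SimpleGraph V) (w : Sym2 V → ℝ) : Prop :=
  ∃ Q : Finset V, Q.card = 5 ∧ ∃ c : V → V → List V,
    (∀ a ∈ Q, ∀ b ∈ Q, a ≠ b →
      ((Indec G w a b ∧ c a b = []) ∨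
        (c a b ≠ [] ∧ (∀ v ∈ c a b, v ∉ Q) ∧ (a :: (c a b ++ [b])).IsChain (Indec G w)))) ∧
    (∀ a ∈ Q, ∀ b ∈ Q, ∀ a' ∈ Q, ∀ b' ∈ Q, a ≠ b → a' ≠ b' →
      ({a, b} : Finset V) ≠ {a', b'} → ∀ v ∈ c a b, v ∉ c a' b')

namespace SimpleGraph

variable [Finite V] [DecidableEq V] {G : SimpleGraph V} {w : Sym2 V → ℝ}

lemma indecK5System_of_containsSubdivisionK5 (hconn : G.Connected) (hw : PosWeights G w)
    (hpruned : Pruned G w) (h : ContainsSubdivisionK5 G) : IndecK5System G w := by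
  obtain ⟨f, hf, P, hpath, hint, hdisj⟩ := h
  -- `c (f i) (f j)` lists the interior vertices of the branch path `P i j`
  let c : V → V → List V := fun x y =>
    (P (Function.invFun f x) (Function.invFun f y)).support.tail.dropLast
  have hc (i j : Fin 5) : c (f i) (f j) = (P i j).support.tail.dropLast := by
    simp only [c]
    rw [Function.leftInverse_invFun hf i, Function.leftInverse_invFun hf j]
  have hsupp (i j : Fin 5) (hij : i ≠ j) : (P i j).support = f i :: (c (f i) (f j) ++ [f j]) :=
    hc i j ▸ (P i j).support_eq_cons_append (hf.ne hij)
  have hinterior (i j : Fin 5) (hij : i ≠ j) (v : V) (hv : v ∈ c (f i) (f j)) :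
      v ∈ interiorSet (P i j) :=
    (hpath i j hij).mem_interiorSet (hc i j ▸ hv)
  refine ⟨Finset.univ.image f, by simp [Finset.card_image_of_injective _ hf], c, ?_, ?_⟩
  · simp only [Finset.mem_image, Finset.mem_univ, true_and, forall_exists_index,
      forall_apply_eq_imp_iff]
    intro i j hfij
    have hij : i ≠ j := hf.ne_iff.mp hfij
    have hchain : (f i :: (c (f i) (f j) ++ [f j])).IsChain (Indec G w) :=
      hsupp i j hij ▸ (P i j).isChain_adj_support.imp fun _ _ hadj => hadj.indec hconn hw hpruned
    by_cases hnil : c (f i) (f j) = []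
    · exact .inl ⟨List.isChain_pair.mp (by simpa [hnil] using hchain), hnil⟩
    · exact .inr ⟨hnil, fun v hv => hint i j hij v (hinterior i j hij v hv), hchain⟩
  · simp only [Finset.mem_image, Finset.mem_univ, true_and, forall_exists_index,
      forall_apply_eq_imp_iff]
    intro i j i' j' hfij hfij' hfpair v hv hv'
    have hij : i ≠ j := hf.ne_iff.mp hfij
    have hij' : i' ≠ j' := hf.ne_iff.mp hfij'
    have hpair : ({i, j} : Finset (Fin 5)) ≠ {i', j'} := fun h =>
      hfpair (by simpa using congrArg (Finset.image f) h)
    refine hdisj i j i' j' hij hij' hpair v (hinterior i j hij v hv) ?_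
    rw [hsupp i' j' hij']
    simp [hv']

lemma containsSubdivisionK5_of_indecK5System (hconn : G.Connected) (h : IndecK5System G w) :
    ContainsSubdivisionK5 G := by
  obtain ⟨Q, hQ, c, hchains, hdisj⟩ := h
  have hchains' : ∀ a ∈ Q, ∀ b ∈ Q, a ≠ b →
      (a :: (c a b ++ [b])).IsChain (Indec G w) ∧ ∀ v ∈ c a b, v ∉ Q := by
    intro a ha b hb hab
    rcases hchains a ha b hb hab with ⟨hi, hnil⟩ | ⟨-, hout, hchain⟩
    · simpa [hnil] using hi
    · exact ⟨hchain, hout⟩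
  let f : Fin 5 ↪ V :=
    (Q.equivFinOfCardEq hQ).symm.toEmbedding.trans (Function.Embedding.subtype _)
  have hfQ (i : Fin 5) : f i ∈ Q := ((Q.equivFinOfCardEq hQ).symm i).2
  have hP (i j : Fin 5) : ∃ p : G.Walk (f i) (f j),
      p.IsPath ∧ ∀ v ∈ interiorSet p, v ∈ c (f i) (f j) ∧ v ∉ Q := by
    obtain rfl | hij := eq_or_ne i j
    · exact ⟨Walk.nil, .nil, fun v ⟨hv, hvi, _⟩ => absurd (by simpa using hv) hvi⟩
    · obtain ⟨hchain, hout⟩ := hchains' _ (hfQ i) _ (hfQ j) (f.injective.ne hij)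
      obtain ⟨p, hp, hpint⟩ := exists_isPath_of_isChain_indec hconn hchain
      exact ⟨p, hp, fun v hv => ⟨hpint v hv, hout v (hpint v hv)⟩⟩
  choose P hpath hint using hP
  refine ⟨f, f.injective, P, fun i j _ => hpath i j, ?_, ?_⟩
  · rintro i j - v hv ⟨k, rfl⟩
    exact (hint i j _ hv).2 (hfQ k)
  · intro i j i' j' hij hij' hpair v hv hv'
    have hvQ := (hint i j v hv).2
    have hv'int : v ∈ interiorSet (P i' j') :=
      ⟨hv', fun h => hvQ (h ▸ hfQ i'), fun h => hvQ (h ▸ hfQ j')⟩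
    have hfpair : ({f i, f j} : Finset V) ≠ {f i', f j'} := fun h =>
      hpair (Finset.map_injective f (by simpa only [Finset.map_insert, Finset.map_singleton]))
    exact hdisj _ (hfQ i) _ (hfQ j) _ (hfQ i') _ (hfQ j') (f.injective.ne hij)
      (f.injective.ne hij') hfpair v (hint i j v hv).1 (hint i' j' v hv'int).1

end SimpleGraph

/-- A pruned positive-weighted graph contains a subdivision of `K₅` iff there is a 5-element
set `Q` of vertices such that each pair of `Q` is joined by a (possibly empty) sequence of
vertices outside `Q` with all consecutive 2-weights indecomposable, the sequences attached to
distinct pairs being disjoint. -/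
theorem stmt_15 {n : ℕ} (G : SimpleGraph (Fin n)) (hconn : G.Connected)
    (w : Sym2 (Fin n) → ℝ) (hw : PosWeights G w) (hpruned : Pruned G w) :
    ContainsSubdivisionK5 G ↔
      ∃ Q : Finset (Fin n), Q.card = 5 ∧ ∃ c : Fin n → Fin n → List (Fin n),
        (∀ a ∈ Q, ∀ b ∈ Q, a ≠ b →
          ((Indec G w a b ∧ c a b = []) ∨
            (c a b ≠ [] ∧ (∀ v ∈ c a b, v ∉ Q) ∧
              List.Chain' (Indec G w) (a :: (c a b ++ [b]))))) ∧
        (∀ a ∈ Q, ∀ b ∈ Q, ∀ a' ∈ Q, ∀ b' ∈ Q, a ≠ b → a' ≠ b' →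
          ({a, b} : Finset (Fin n)) ≠ {a', b'} → ∀ v ∈ c a b, v ∉ c a' b') :=
  ⟨indecK5System_of_containsSubdivisionK5 hconn hw hpruned,
    containsSubdivisionK5_of_indecK5System hconn⟩
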